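/- If (y★, λ★) is a saddle point of the augmented supra-Lagrangian L_a(y,λ) = f̃(y) + λᵀ L y + ½ yᵀ L y, with L symmetric positive semidefinite whose kernel is spanned by the all-ones vector, then L y★ = 0, hence y★ = x★·1 for some x★ ∈ ℝ, and x★ minimizes x ↦ f̃(x·1). -/
import Mathlib


open Matrix

/-- If `(y★, λ★)` is a saddle point of the augmented supra-Lagrangian with
`ker L = span{1}`, then `L y★ = 0`, hence `y★ = x★·1` for some `x★` which
minimizes `x ↦ f̃(x·1)`. -/
theorem saddle_point_consensus (n : ℕ) (L : Matrix (Fin n) (Fin n) ℝ)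
    (hsym : L.IsSymm) (hpsd : ∀ y : Fin n → ℝ, 0 ≤ y ⬝ᵥ (L *ᵥ y))
    (hker : ∀ v : Fin n → ℝ, L *ᵥ v = 0 ↔ ∃ c : ℝ, v = fun _ => c)
    (f : (Fin n → ℝ) → ℝ) (hf : ConvexOn ℝ Set.univ f) (hdiff : Differentiable ℝ f)
    (La : (Fin n → ℝ) → (Fin n → ℝ) → ℝ)
    (hLa : ∀ y l, La y l = f y + l ⬝ᵥ (L *ᵥ y) + (1 / 2) * (y ⬝ᵥ (L *ᵥ y)))
    (ys ls : Fin n → ℝ)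
    (hsaddle : ∀ y l, La ys l ≤ La ys ls ∧ La ys ls ≤ La y ls) :
    L *ᵥ ys = 0 ∧ ∃ xs : ℝ, (ys = fun _ => xs) ∧
      ∀ x : ℝ, f (fun _ => xs) ≤ f (fun _ => x) := by
  set w := L *ᵥ ys with hw
  have h1 : w ⬝ᵥ w ≤ 0 := by
    have h := (hsaddle ys (ls + w)).1
    rw [hLa, hLa, add_dotProduct] at h
    linarith
  have hw0 : w = 0 := by
    have := dotProduct_self_eq_zero (v := w)
    have hge : 0 ≤ w ⬝ᵥ w := Finset.sum_nonneg fun i _ => mul_self_nonneg _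
    exact this.mp (le_antisymm h1 hge)
  refine ⟨hw0, ?_⟩
  obtain ⟨c, hc⟩ := (hker ys).mp hw0
  refine ⟨c, hc, fun x => ?_⟩
  have hx : L *ᵥ (fun _ => x) = 0 := (hker _).mpr ⟨x, rfl⟩
  have h2 := (hsaddle (fun _ => x) ls).2
  rw [hLa, hLa, hx] at h2
  rw [← hw] at h2
  rw [hw0] at h2
  simp only [dotProduct_zero] at h2
  rw [← hc]
  linarith
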